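/- arXiv:1404.5900 — 9 statements merged into one kernel-verified Lean document; each statement's English description precedes it below -/
import Mathlib

section
/- For every A ∈ Mat_{n×n}(ℝ), every x ∈ ℝ^n, and every pair of indices (i,j) with i in group α and j in group β, the (i,j) entry of π_A(x) = −T_x D_x A D_x T_x^t equals x_i x_j ( −a_{ij} + (A^{α,β} x^β)_i + ((A^{α,β})^t x^α)_j − (x^α)^t A^{α,β} x^β ). -/
/-! Left multiplication by `T_x` replaces row `i` of a matrix by `x_i` times the sum of the
rows of `i`'s group, minus row `i`; right multiplication by `T_xᵀ` does the same to columns.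
Applying both to `D_x A D_x`, whose entries are `x_k a_{kl} x_l`, gives the formula. -/

open Matrix

/-- Index set of a polymatrix game with signature `n : Fin p → ℕ`:
`i = ⟨α, k⟩` is the `k`-th strategy of group `α`. -/
abbrev Idx (p : ℕ) (n : Fin p → ℕ) : Type := (α : Fin p) × Fin (n α)

noncomputable section

/-- The polymatrix replicator vector field `X_{(n̲,A)}`; note that
`Σ_β (x^α)ᵗ A^{α,β} x^β = Σ_{k ∈ α} x_k (Ax)_k`. -/
def replicator {p : ℕ} {n : Fin p → ℕ} (A : Matrix (Idx p n) (Idx p n) ℝ)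
    (x : Idx p n → ℝ) (i : Idx p n) : ℝ :=
  x i * (A.mulVec x i - ∑ k : Fin (n i.1), x ⟨i.1, k⟩ * A.mulVec x ⟨i.1, k⟩)

/-- The polytope `Γ_n̲` (product of simplexes). -/
def Gamma (p : ℕ) (n : Fin p → ℕ) : Set (Idx p n → ℝ) :=
  {x | (∀ i, 0 ≤ x i) ∧ ∀ α : Fin p, ∑ k : Fin (n α), x ⟨α, k⟩ = 1}

/-- The relative interior `Γ°_n̲`. -/
def GammaInt (p : ℕ) (n : Fin p → ℕ) : Set (Idx p n → ℝ) :=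
  {x | (∀ i, 0 < x i) ∧ ∀ α : Fin p, ∑ k : Fin (n α), x ⟨α, k⟩ = 1}

/-- The block diagonal matrix `T_x = diag(T^1_x,…,T^p_x)`, `T^α_x = x^α 𝟙ᵗ - I`. -/
def Tmat {p : ℕ} {n : Fin p → ℕ} (x : Idx p n → ℝ) : Matrix (Idx p n) (Idx p n) ℝ :=
  fun i j => (if i.1 = j.1 then x i else 0) - (if i = j then 1 else 0)

/-- The bivector `π_A(x) = - T_x D_x A D_x T_xᵀ`. -/
def piA {p : ℕ} {n : Fin p → ℕ} (A : Matrix (Idx p n) (Idx p n) ℝ) (x : Idx p n → ℝ) :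
    Matrix (Idx p n) (Idx p n) ℝ :=
  -(Tmat x * Matrix.diagonal x * A * Matrix.diagonal x * (Tmat x)ᵀ)

/-- A formal equilibrium of the polymatrix game `(n̲, A)`. -/
def FormalEq {p : ℕ} {n : Fin p → ℕ} (A : Matrix (Idx p n) (Idx p n) ℝ)
    (q : Idx p n → ℝ) : Prop :=
  (∀ (α : Fin p) (i j : Fin (n α)), A.mulVec q ⟨α, i⟩ = A.mulVec q ⟨α, j⟩) ∧
  ∀ α : Fin p, ∑ j : Fin (n α), q ⟨α, j⟩ = 1

namespace Tmat

variable {p : ℕ} {n : Fin p → ℕ} (x : Idx p n → ℝ)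

theorem sum_mul (i : Idx p n) (f : Idx p n → ℝ) :
    ∑ k, Tmat x i k * f k = x i * ∑ k : Fin (n i.1), f ⟨i.1, k⟩ - f i := by
  simp only [Tmat, sub_mul, Finset.sum_sub_distrib, ite_mul, one_mul, zero_mul,
    Finset.sum_ite_eq, Finset.mem_univ, if_true, Fintype.sum_sigma]
  rw [Finset.sum_eq_single i.1 (fun b _ hb => by simp [Ne.symm hb]) (by simp)]
  simp [Finset.mul_sum]

theorem mul_apply (M : Matrix (Idx p n) (Idx p n) ℝ) (i j : Idx p n) :
    (Tmat x * M) i j = x i * ∑ k : Fin (n i.1), M ⟨i.1, k⟩ j - M i j :=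
  sum_mul x i fun k => M k j

theorem mul_transpose_apply (M : Matrix (Idx p n) (Idx p n) ℝ) (i j : Idx p n) :
    (M * (Tmat x)ᵀ) i j = x j * ∑ l : Fin (n j.1), M i ⟨j.1, l⟩ - M i j := by
  rw [← transpose_transpose (M * _), transpose_mul, transpose_transpose, transpose_apply,
    mul_apply]
  rfl

theorem mul_mul_transpose_apply (M : Matrix (Idx p n) (Idx p n) ℝ) (i j : Idx p n) :
    (Tmat x * M * (Tmat x)ᵀ) i j =
      x i * x j * ∑ k : Fin (n i.1), ∑ l : Fin (n j.1), M ⟨i.1, k⟩ ⟨j.1, l⟩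
        - x i * ∑ k : Fin (n i.1), M ⟨i.1, k⟩ j - x j * ∑ l : Fin (n j.1), M i ⟨j.1, l⟩
        + M i j := by
  rw [mul_transpose_apply, Finset.sum_comm]
  simp only [mul_apply, Finset.sum_sub_distrib, ← Finset.mul_sum]
  ring

end Tmat

theorem stmt4_general {p : ℕ} {n : Fin p → ℕ}
    (A : Matrix (Idx p n) (Idx p n) ℝ) (x : Idx p n → ℝ) (i j : Idx p n) :
    piA A x i j =
      x i * x j *
        (-(A i j) + (∑ l : Fin (n j.1), A i ⟨j.1, l⟩ * x ⟨j.1, l⟩)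
          + (∑ k : Fin (n i.1), A ⟨i.1, k⟩ j * x ⟨i.1, k⟩)
          - ∑ k : Fin (n i.1), ∑ l : Fin (n j.1),
              x ⟨i.1, k⟩ * A ⟨i.1, k⟩ ⟨j.1, l⟩ * x ⟨j.1, l⟩) := by
  have hDAD : ∀ k l, (diagonal x * A * diagonal x) k l = x k * A k l * x l := fun k l => by
    rw [mul_diagonal, diagonal_mul]
  have hpi : piA A x = -(Tmat x * (diagonal x * A * diagonal x) * (Tmat x)ᵀ) := by
    simp only [piA, Matrix.mul_assoc]
  rw [hpi, neg_apply, Tmat.mul_mul_transpose_apply]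
  simp only [hDAD, mul_add, mul_sub, mul_neg, Finset.mul_sum]
  simp only [mul_comm, mul_left_comm, mul_assoc]
  ring

/-- Entrywise formula for `π_A(x) = -T_x D_x A D_x T_xᵀ`: for `i ∈ α`, `j ∈ β`,
`π_A(x)_{ij} = x_i x_j (-a_{ij} + (A^{α,β}x^β)_i + ((A^{α,β})ᵗx^α)_j - (x^α)ᵗA^{α,β}x^β)`. -/
theorem stmt4 {p : ℕ} {n : Fin p → ℕ} (hn : ∀ α, 0 < n α)
    (A : Matrix (Idx p n) (Idx p n) ℝ) (x : Idx p n → ℝ) (i j : Idx p n) :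
    piA A x i j =
      x i * x j *
        (-(A i j) + (∑ l : Fin (n j.1), A i ⟨j.1, l⟩ * x ⟨j.1, l⟩)
          + (∑ k : Fin (n i.1), A ⟨i.1, k⟩ j * x ⟨i.1, k⟩)
          - ∑ k : Fin (n i.1), ∑ l : Fin (n j.1),
              x ⟨i.1, k⟩ * A ⟨i.1, k⟩ ⟨j.1, l⟩ * x ⟨j.1, l⟩) :=
  stmt4_general A x i j
end
end

section
/- Suppose q ∈ ℝ^n is a formal equilibrium of the polymatrix game (n̲,A). Then for every x in the relative interior Γ°_n̲ (points of Γ_n̲ with all coordinates positive), X_{(n̲,A)}(x) = π_A(x) ∇H(x), where H(x) = Σ_{i=1}^n q_i log x_i (so that ∇H(x) is the vector with components q_i/x_i). -/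
open Matrix

noncomputable section

/-! With `∇H = q / x`, the normalisation of each block `q^α` gives `D_x T_xᵀ ∇H = x - q`.
Since `q` is a formal equilibrium, `A q` is constant on every group, and `T_x D_x` annihilates
such vectors because each block `x^α` sums to `1`. What is left of `π_A(x) ∇H` is
`-T_x D_x A x`, which is the replicator field. -/

theorem Matrix.diagonal_mulVec_eq_mul {ι R : Type*} [Fintype ι] [DecidableEq ι]
    [NonUnitalNonAssocSemiring R] (x w : ι → R) : diagonal x *ᵥ w = x * w :=
  funext (mulVec_diagonal x w)

section

variable {p : ℕ} {n : Fin p → ℕ}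

namespace Tmat

theorem eq_sub_one (x : Idx p n → ℝ) :
    Tmat x = Matrix.of (fun i j => if i.1 = j.1 then x i else 0) - 1 := by
  ext i j
  simp [Tmat, Matrix.one_apply]

theorem mulVec_apply (x v : Idx p n → ℝ) (i : Idx p n) :
    (Tmat x *ᵥ v) i = x i * ∑ k : Fin (n i.1), v ⟨i.1, k⟩ - v i := by
  rw [eq_sub_one, sub_mulVec, Pi.sub_apply, one_mulVec]
  simp only [mulVec, dotProduct, of_apply, Fintype.sum_sigma]
  simp [Finset.mul_sum]

theorem transpose_mulVec_apply (x v : Idx p n → ℝ) (i : Idx p n) :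
    ((Tmat x)ᵀ *ᵥ v) i = ∑ k : Fin (n i.1), x ⟨i.1, k⟩ * v ⟨i.1, k⟩ - v i := by
  rw [eq_sub_one, transpose_sub, transpose_one, sub_mulVec, Pi.sub_apply, one_mulVec]
  simp [mulVec, dotProduct, Fintype.sum_sigma, ite_mul, eq_comm]

theorem mulVec_mul_eq_zero {x c : Idx p n → ℝ} (hx : ∀ α, ∑ k : Fin (n α), x ⟨α, k⟩ = 1)
    (hc : ∀ (α : Fin p) (k l : Fin (n α)), c ⟨α, k⟩ = c ⟨α, l⟩) : Tmat x *ᵥ (x * c) = 0 := by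
  funext i
  have hci : ∀ k, c ⟨i.1, k⟩ = c i := fun k => hc i.1 k i.2
  simp only [mulVec_apply, Pi.mul_apply, hci, ← Finset.sum_mul, hx, Pi.zero_apply]
  ring

theorem mul_transpose_mulVec_div {x q : Idx p n → ℝ} (hx : ∀ j, x j ≠ 0)
    (hq : ∀ α, ∑ k : Fin (n α), q ⟨α, k⟩ = 1) : x * ((Tmat x)ᵀ *ᵥ (q / x)) = x - q := by
  funext i
  simp only [transpose_mulVec_apply, Pi.mul_apply, Pi.div_apply, Pi.sub_apply,
    mul_div_cancel₀ _ (hx _), hq]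
  field_simp [hx i]

end Tmat

theorem replicator_eq_neg_Tmat_mulVec (A : Matrix (Idx p n) (Idx p n) ℝ) (x : Idx p n → ℝ) :
    replicator A x = -(Tmat x *ᵥ (x * (A *ᵥ x))) := by
  funext i
  simp only [replicator, Pi.neg_apply, Tmat.mulVec_apply, Pi.mul_apply]
  ring

theorem piA_mulVec (A : Matrix (Idx p n) (Idx p n) ℝ) (x v : Idx p n → ℝ) :
    piA A x *ᵥ v = -(Tmat x *ᵥ (x * (A *ᵥ (x * ((Tmat x)ᵀ *ᵥ v))))) := by
  simp only [piA, neg_mulVec, ← mulVec_mulVec, diagonal_mulVec_eq_mul]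

end

theorem stmt5_general {p : ℕ} {n : Fin p → ℕ}
    (A : Matrix (Idx p n) (Idx p n) ℝ) (q : Idx p n → ℝ) (hq : FormalEq A q)
    (x : Idx p n → ℝ) (hx : x ∈ GammaInt p n) (i : Idx p n) :
    replicator A x i = (piA A x).mulVec (fun j => q j / x j) i := by
  obtain ⟨hAq, hq⟩ := hq
  obtain ⟨hxpos, hx⟩ := hx
  have hgrad : x * ((Tmat x)ᵀ *ᵥ (q / x)) = x - q :=
    Tmat.mul_transpose_mulVec_div (fun j => (hxpos j).ne') hq
  have hAq_vanish : Tmat x *ᵥ (x * (A *ᵥ q)) = 0 := Tmat.mulVec_mul_eq_zero hx hAq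
  change _ = (piA A x *ᵥ (q / x)) i
  rw [piA_mulVec, hgrad, mulVec_sub, mul_sub, mulVec_sub, hAq_vanish, sub_zero,
    replicator_eq_neg_Tmat_mulVec]

/-- If `q` is a formal equilibrium of `(n̲,A)` then on the relative interior of `Γ_n̲`
the replicator field is the `π_A`-gradient of `H(x) = Σ_i q_i log x_i`,
whose gradient vector has components `q_i / x_i`. -/
theorem stmt5 {p : ℕ} {n : Fin p → ℕ} (hn : ∀ α, 0 < n α)
    (A : Matrix (Idx p n) (Idx p n) ℝ) (q : Idx p n → ℝ) (hq : FormalEq A q)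
    (x : Idx p n → ℝ) (hx : x ∈ GammaInt p n) (i : Idx p n) :
    replicator A x i = (piA A x).mulVec (fun j => q j / x j) i :=
  stmt5_general A q hq x hx i
end
end

section
/- If A ∈ Mat_{n×n}(ℝ) is skew-symmetric, then π_A is a Poisson bivector on ℝ^n: the matrix π_A(x) is skew-symmetric for every x ∈ ℝ^n, and the Jacobi identity Σ_{l=1}^n ( ∂(π_A)_{ij}/∂x_l · (π_A)_{lk} + ∂(π_A)_{jk}/∂x_l · (π_A)_{li} + ∂(π_A)_{ki}/∂x_l · (π_A)_{lj} ) = 0 holds at every point x ∈ ℝ^n and for all indices i,j,k. -/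
open Matrix

noncomputable section

/-!
Since `T_x D_x` is symmetric, `π_A(x) = -D_x W(x) D_x` with `W(x) = T_xᵀ A T_x`, that is
`π_ij = -x_i x_j W_ij`, and `W` is skew-symmetric along with `A`. As `T_x` is affine in `x`, with
`∂_l T_x` supported at row `l` inside the block of `l`, the Jacobi sum equals `x_i x_j x_k` times the
cyclic sum of `W_ij W_ik + W_ij W_jk + G_{α(i)}(j,k) - G_{α(j)}(i,k)`, where
`G_α(j,k) = Σ_{l ∈ α} x_l (A T_x)_{lj} W_{lk}`. The products cancel by skew-symmetry of `W`, and the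
`G`-terms cancel because `G_α` is symmetric: the rows of `W + A T_x` coincide within a block, so
`G_α(j,k) = c_j c_k - Σ_{l ∈ α} x_l (A T_x)_{lj} (A T_x)_{lk}` for a common row `c`.
-/

section

variable {p : ℕ} {n : Fin p → ℕ}

def Wmat (A : Matrix (Idx p n) (Idx p n) ℝ) (x : Idx p n → ℝ) : Matrix (Idx p n) (Idx p n) ℝ :=
  (Tmat x)ᵀ * A * Tmat x

lemma Tmat_mul_diagonal (x : Idx p n → ℝ) : Tmat x * diagonal x = diagonal x * (Tmat x)ᵀ := by
  ext i k
  simp only [mul_diagonal, diagonal_mul, transpose_apply, Tmat]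
  by_cases h : i = k
  · subst h; ring
  · simp [h, Ne.symm h, eq_comm]

lemma piA_eq (A : Matrix (Idx p n) (Idx p n) ℝ) (x : Idx p n → ℝ) :
    piA A x = -(diagonal x * Wmat A x * diagonal x) := by
  rw [piA, Wmat]
  congr 1
  calc Tmat x * diagonal x * A * diagonal x * (Tmat x)ᵀ
      = (Tmat x * diagonal x) * A * (diagonal x * (Tmat x)ᵀ) := by simp only [Matrix.mul_assoc]
    _ = (diagonal x * (Tmat x)ᵀ) * A * (Tmat x * diagonal x) := by rw [Tmat_mul_diagonal]
    _ = diagonal x * ((Tmat x)ᵀ * A * Tmat x) * diagonal x := by simp only [Matrix.mul_assoc]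

lemma piA_apply (A : Matrix (Idx p n) (Idx p n) ℝ) (x : Idx p n → ℝ) (i j : Idx p n) :
    piA A x i j = -(x i * x j * Wmat A x i j) := by
  rw [piA_eq, Matrix.neg_apply, mul_diagonal, diagonal_mul]
  ring

@[fun_prop]
lemma differentiable_Tmat_apply (a i : Idx p n) :
    Differentiable ℝ (fun y : Idx p n → ℝ => Tmat y a i) := by
  unfold Tmat; split_ifs <;> fun_prop

lemma fderiv_Tmat_apply (x : Idx p n → ℝ) (a i l : Idx p n) :
    fderiv ℝ (fun y : Idx p n → ℝ => Tmat y a i) x (Pi.single l 1) =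
      if a = l ∧ l.1 = i.1 then 1 else 0 := by
  by_cases h : a.1 = i.1
  · simp only [Tmat, h, if_true, fderiv_sub_const, (hasFDerivAt_apply a x).fderiv,
      ContinuousLinearMap.proj_apply, Pi.single_apply]
    grind
  · have hal : ¬(a = l ∧ l.1 = i.1) := fun ⟨hal, hl⟩ => h (hal ▸ hl)
    simp [Tmat, h, hal]

lemma fderiv_Wmat_apply (A : Matrix (Idx p n) (Idx p n) ℝ) (x : Idx p n → ℝ) (i j l : Idx p n) :
    fderiv ℝ (fun y => Wmat A y i j) x (Pi.single l 1) =
      (if l.1 = i.1 then (A * Tmat x) l j else 0) + (if l.1 = j.1 then ((Tmat x)ᵀ * A) i l else 0) := by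
  simp only [Wmat, mul_apply, transpose_apply]
  simp (disch := fun_prop) only [fderiv_fun_sum, fderiv_fun_mul, fderiv_Tmat_apply, FunLike.coe_sum,
    Finset.sum_apply, _root_.add_apply, _root_.smul_apply, smul_eq_mul, fderiv_const_apply, smul_zero,
    zero_add]
  simp only [ite_and, mul_ite, mul_one, mul_zero, Finset.sum_add_distrib, Finset.sum_ite_eq',
    Finset.mem_univ, if_true]
  split_ifs <;> simp [mul_comm, add_comm]

@[fun_prop]
lemma differentiable_Wmat_apply (A : Matrix (Idx p n) (Idx p n) ℝ) (i j : Idx p n) :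
    Differentiable ℝ (fun y => Wmat A y i j) := by
  simp only [Wmat, mul_apply, transpose_apply]
  fun_prop

lemma fderiv_piA_apply (A : Matrix (Idx p n) (Idx p n) ℝ) (x : Idx p n → ℝ) (i j l : Idx p n) :
    fderiv ℝ (fun y => piA A y i j) x (Pi.single l 1) =
      -(((Pi.single l 1 : Idx p n → ℝ) i * x j + x i * (Pi.single l 1 : Idx p n → ℝ) j) * Wmat A x i j
        + x i * x j * fderiv ℝ (fun y => Wmat A y i j) x (Pi.single l 1)) := by
  simp only [piA_apply]
  simp (disch := fun_prop) only [fderiv_fun_neg, fderiv_fun_mul, (hasFDerivAt_apply _ x).fderiv,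
    _root_.neg_apply, _root_.add_apply, _root_.smul_apply, smul_eq_mul, ContinuousLinearMap.proj_apply]
  ring

lemma Wmat_add_mul_Tmat_apply (A : Matrix (Idx p n) (Idx p n) ℝ) (x : Idx p n → ℝ)
    (l k : Idx p n) :
    Wmat A x l k + (A * Tmat x) l k = ∑ m, if m.1 = l.1 then x m * (A * Tmat x) m k else 0 := by
  rw [Wmat, Matrix.mul_assoc, mul_apply]
  simp only [transpose_apply, Tmat, sub_mul, ite_mul, one_mul, zero_mul, Finset.sum_sub_distrib,
    Finset.sum_ite_eq', Finset.mem_univ, if_true, sub_add_cancel]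

def blockPairing (A : Matrix (Idx p n) (Idx p n) ℝ) (x : Idx p n → ℝ) (α : Fin p) (j k : Idx p n) :
    ℝ :=
  ∑ l, if l.1 = α then x l * (A * Tmat x) l j * Wmat A x l k else 0

lemma blockPairing_comm (A : Matrix (Idx p n) (Idx p n) ℝ) (x : Idx p n → ℝ) (α : Fin p)
    (j k : Idx p n) :
    blockPairing A x α j k = blockPairing A x α k j := by
  set U := A * Tmat x
  set c : Idx p n → ℝ := fun k => ∑ m, if m.1 = α then x m * U m k else 0
  have expand : ∀ j k, blockPairing A x α j k
      = c j * c k - ∑ l, if l.1 = α then x l * U l j * U l k else 0 := by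
    intro j k
    simp only [blockPairing, c, Finset.sum_mul, ite_mul, zero_mul, ← Finset.sum_sub_distrib]
    refine Finset.sum_congr rfl fun l _ => ?_
    split_ifs with hl
    · rw [eq_sub_of_add_eq (Wmat_add_mul_Tmat_apply A x l k), hl]
      ring
    · simp
  rw [expand, expand, mul_comm (c k)]
  congr 2 with l
  split_ifs <;> ring

section

variable {A : Matrix (Idx p n) (Idx p n) ℝ}

lemma Wmat_apply_swap (hA : Aᵀ = -A) (x : Idx p n → ℝ) (i j : Idx p n) :
    Wmat A x j i = -Wmat A x i j := by
  have h : (Wmat A x)ᵀ = -Wmat A x := by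
    simp [Wmat, transpose_mul, hA, Matrix.mul_assoc]
  simpa using congrFun (congrFun h i) j

lemma piA_transpose (hA : Aᵀ = -A) (x : Idx p n → ℝ) : (piA A x)ᵀ = -piA A x := by
  ext i j
  rw [transpose_apply, Matrix.neg_apply, piA_apply, piA_apply, Wmat_apply_swap hA]
  ring

lemma transpose_Tmat_mul_apply (hA : Aᵀ = -A) (x : Idx p n → ℝ) (i l : Idx p n) :
    ((Tmat x)ᵀ * A) i l = -(A * Tmat x) l i := by
  have h : (Tmat x)ᵀ * A = -(A * Tmat x)ᵀ := by simp [transpose_mul, hA]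
  rw [h, Matrix.neg_apply, transpose_apply]

lemma sum_fderiv_piA_mul_piA (hA : Aᵀ = -A) (x : Idx p n → ℝ) (i j k : Idx p n) :
    ∑ l, fderiv ℝ (fun y => piA A y i j) x (Pi.single l 1) * piA A x l k
      = x i * x j * x k * (Wmat A x i j * Wmat A x i k + Wmat A x i j * Wmat A x j k
        + blockPairing A x i.1 j k - blockPairing A x j.1 i k) := by
  have summand : ∀ l, fderiv ℝ (fun y => piA A y i j) x (Pi.single l 1) * piA A x l k
      = (if i = l then x j * Wmat A x i j * (x l * x k * Wmat A x l k) else 0)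
        + (if j = l then x i * Wmat A x i j * (x l * x k * Wmat A x l k) else 0)
        + x i * x j * x k * ((if l.1 = i.1 then x l * (A * Tmat x) l j * Wmat A x l k else 0)
          - (if l.1 = j.1 then x l * (A * Tmat x) l i * Wmat A x l k else 0)) := by
    intro l
    rw [fderiv_piA_apply, fderiv_Wmat_apply, transpose_Tmat_mul_apply hA, piA_apply,
      Pi.single_apply, Pi.single_apply]
    split_ifs <;> ring
  simp only [summand, Finset.sum_add_distrib, ← Finset.mul_sum, Finset.sum_sub_distrib,
    Finset.sum_ite_eq, Finset.mem_univ, if_true, blockPairing]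
  ring

end

end

theorem stmt6_general {p : ℕ} {n : Fin p → ℕ}
    (A : Matrix (Idx p n) (Idx p n) ℝ) (hA : Aᵀ = -A) :
    (∀ x : Idx p n → ℝ, (piA A x)ᵀ = -(piA A x)) ∧
    (∀ (x : Idx p n → ℝ) (i j k : Idx p n),
      ∑ l : Idx p n,
        (fderiv ℝ (fun y => piA A y i j) x (Pi.single l 1) * piA A x l k
          + fderiv ℝ (fun y => piA A y j k) x (Pi.single l 1) * piA A x l i
          + fderiv ℝ (fun y => piA A y k i) x (Pi.single l 1) * piA A x l j) = 0) := by
  refine ⟨piA_transpose hA, fun x i j k => ?_⟩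
  simp only [Finset.sum_add_distrib, sum_fderiv_piA_mul_piA hA]
  rw [blockPairing_comm A x j.1 k i, blockPairing_comm A x k.1 j i, blockPairing_comm A x i.1 k j,
    Wmat_apply_swap hA x i j, Wmat_apply_swap hA x i k, Wmat_apply_swap hA x j k]
  ring

/-- If `A` is skew-symmetric then `π_A` is a Poisson bivector on `ℝ^n`:
`π_A(x)` is skew-symmetric for every `x`, and the Jacobi identity holds. -/
theorem stmt6 {p : ℕ} {n : Fin p → ℕ} (hn : ∀ α, 0 < n α)
    (A : Matrix (Idx p n) (Idx p n) ℝ) (hA : Aᵀ = -A) :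
    (∀ x : Idx p n → ℝ, (piA A x)ᵀ = -(piA A x)) ∧
    (∀ (x : Idx p n → ℝ) (i j k : Idx p n),
      ∑ l : Idx p n,
        (fderiv ℝ (fun y => piA A y i j) x (Pi.single l 1) * piA A x l k
          + fderiv ℝ (fun y => piA A y j k) x (Pi.single l 1) * piA A x l i
          + fderiv ℝ (fun y => piA A y k i) x (Pi.single l 1) * piA A x l j) = 0) :=
  stmt6_general A hA
end
end

section
/- Let A ∈ Mat_{n×n}(ℝ) be skew-symmetric and B = −E A E^t. Then the map φ : ℝ^{n−p} → Γ°_n̲ is a smooth diffeomorphism onto the relative interior Γ°_n̲, and for every u ∈ ℝ^{n−p}, (d_uφ) B (d_uφ)^t = π_A(φ(u)), where d_uφ is the Jacobian matrix of φ at u. In other words, φ is a Poisson diffeomorphism from ℝ^{n−p} with the constant Poisson structure B onto (Γ°_n̲, π_A). -/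
open Matrix

noncomputable section

/-- Index set for the chart domain `ℝ^{n-p}`: for each group `α` a copy of `ℝ^{n_α - 1}`. -/
abbrev Kdx (p : ℕ) (n : Fin p → ℕ) : Type := (α : Fin p) × Fin (n α - 1)

/-- The block diagonal matrix `E = diag(E_1,…,E_p)`, where `E_α = [-I_{n_α-1} | 𝟙]`. -/
def Emat {p : ℕ} {n : Fin p → ℕ} : Matrix (Kdx p n) (Idx p n) ℝ :=
  fun k i =>
    if k.1 = i.1 then
      (if (i.2 : ℕ) = n i.1 - 1 then 1 else if (i.2 : ℕ) = (k.2 : ℕ) then -1 else 0)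
    else 0

/-- The map `φ : ℝ^{n-p} → Γ°_n̲`, given groupwise by
`φ^α(u^α) = (e^{u^α_1}/S, …, e^{u^α_{n_α-1}}/S, 1/S)`, `S = 1 + Σ_k e^{u^α_k}`. -/
def phi {p : ℕ} {n : Fin p → ℕ} (u : Kdx p n → ℝ) (i : Idx p n) : ℝ :=
  (if h : (i.2 : ℕ) < n i.1 - 1 then Real.exp (u ⟨i.1, ⟨i.2, h⟩⟩) else 1) /
    (1 + ∑ k : Fin (n i.1 - 1), Real.exp (u ⟨i.1, k⟩))

/-- The Jacobian matrix `d_uφ` of `φ` at `u`. -/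
def Jphi {p : ℕ} {n : Fin p → ℕ} (u : Kdx p n → ℝ) : Matrix (Idx p n) (Kdx p n) ℝ :=
  fun i k => fderiv ℝ (fun v => phi v i) u (Pi.single k 1)

namespace PolyAux

variable {p : ℕ} {n : Fin p → ℕ}

/-- The common denominator of the `α`-block of `phi`. -/
def den (u : Kdx p n → ℝ) (α : Fin p) : ℝ := 1 + ∑ k : Fin (n α - 1), Real.exp (u ⟨α, k⟩)

lemma den_pos (u : Kdx p n → ℝ) (α : Fin p) : 0 < den u α := by
  have h : 0 ≤ ∑ k : Fin (n α - 1), Real.exp (u ⟨α, k⟩) :=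
    Finset.sum_nonneg fun _ _ => (Real.exp_pos _).le
  unfold den; linarith

lemma phi_eq (u : Kdx p n → ℝ) (i : Idx p n) :
    phi u i = (if h : (i.2 : ℕ) < n i.1 - 1 then Real.exp (u ⟨i.1, ⟨i.2, h⟩⟩) else 1) /
      den u i.1 := rfl

lemma phi_pos (u : Kdx p n → ℝ) (i : Idx p n) : 0 < phi u i := by
  rw [phi_eq]
  apply div_pos _ (den_pos u i.1)
  split
  · exact Real.exp_pos _
  · exact one_pos

lemma sum_dite {m : ℕ} (hm : 0 < m) (g : Fin (m - 1) → ℝ) :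
    ∑ j : Fin m, (if h : (j : ℕ) < m - 1 then g ⟨j, h⟩ else 1) = 1 + ∑ k, g k := by
  obtain ⟨m', rfl⟩ : ∃ m', m = m' + 1 := ⟨m - 1, by omega⟩
  simp only [Nat.add_sub_cancel]
  rw [Fin.sum_univ_castSucc]
  have h1 : ∀ j : Fin m', (if h : ((j.castSucc : Fin (m' + 1)) : ℕ) < m' then g ⟨j.castSucc, h⟩ else 1) = g j := by
    intro j
    rw [dif_pos (show ((j.castSucc : Fin (m' + 1)) : ℕ) < m' from j.isLt)]
    exact congrArg g (Fin.ext (by simp))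
  rw [Finset.sum_congr rfl fun j _ => h1 j]
  rw [dif_neg (show ¬ ((Fin.last m' : ℕ) < m') by simp)]
  ring

lemma sum_phi (u : Kdx p n → ℝ) (α : Fin p) (hα : 0 < n α) :
    ∑ j : Fin (n α), phi u ⟨α, j⟩ = 1 := by
  have : ∀ j : Fin (n α), phi u ⟨α, j⟩ =
      (if h : (j : ℕ) < n α - 1 then Real.exp (u ⟨α, ⟨j, h⟩⟩) else 1) / den u α :=
    fun j => rfl
  rw [Finset.sum_congr rfl fun j _ => this j, ← Finset.sum_div,
    sum_dite hα (fun k => Real.exp (u ⟨α, k⟩))]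
  exact div_self (den_pos u α).ne'

lemma sum_split {m : ℕ} (hm : 0 < m) (f : Fin m → ℝ) :
    ∑ j, f j = (∑ k : Fin (m - 1), f ⟨k, lt_of_lt_of_le k.isLt (Nat.sub_le m 1)⟩)
      + f ⟨m - 1, Nat.sub_lt hm one_pos⟩ := by
  obtain ⟨m', rfl⟩ : ∃ m', m = m' + 1 := ⟨m - 1, by omega⟩
  simp only [Nat.add_sub_cancel]
  rw [Fin.sum_univ_castSucc]
  rfl

/-- inclusion of a chart index into the full index set -/
def inc (k : Kdx p n) : Idx p n := ⟨k.1, ⟨k.2, lt_of_lt_of_le k.2.isLt (Nat.sub_le _ _)⟩⟩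

/-- the last index of the group of `k` -/
def lst (k : Kdx p n) : Idx p n := ⟨k.1, ⟨n k.1 - 1, by have := k.2.isLt; omega⟩⟩

lemma phi_inc (u : Kdx p n → ℝ) (k : Kdx p n) :
    phi u (inc k) = Real.exp (u k) / den u k.1 := by
  obtain ⟨a, b⟩ := k
  rw [phi_eq]
  congr 1
  rw [dif_pos (show ((inc ⟨a, b⟩).2 : ℕ) < n (inc ⟨a, b⟩).1 - 1 from b.isLt)]
  rfl

lemma phi_lst (u : Kdx p n → ℝ) (k : Kdx p n) :
    phi u (lst k) = 1 / den u k.1 := by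
  rw [phi_eq]
  congr 1
  rw [dif_neg (show ¬ (((lst k).2 : ℕ) < n (lst k).1 - 1) from lt_irrefl _)]

end PolyAux
namespace PolyAux
variable {p : ℕ} {n : Fin p → ℕ}

lemma contDiff_den (α : Fin p) : ContDiff ℝ (⊤ : ℕ∞) (fun u : Kdx p n → ℝ => den u α) := by
  unfold den
  apply ContDiff.add contDiff_const
  apply ContDiff.sum
  intro k _
  exact Real.contDiff_exp.comp (ContinuousLinearMap.proj (R := ℝ) (φ := fun _ : Kdx p n => ℝ) (⟨α, k⟩ : Kdx p n)).contDiff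

lemma contDiff_phi : ContDiff ℝ (⊤ : ℕ∞) (phi (p := p) (n := n)) := by
  rw [contDiff_pi]
  intro i
  have h1 : ∀ u : Kdx p n → ℝ, phi u i =
      (if h : (i.2 : ℕ) < n i.1 - 1 then Real.exp (u ⟨i.1, ⟨i.2, h⟩⟩) else 1) / den u i.1 :=
    fun u => rfl
  simp only [h1]
  apply ContDiff.div _ (contDiff_den i.1) (fun u => (den_pos u i.1).ne')
  by_cases h : (i.2 : ℕ) < n i.1 - 1
  · simp only [dif_pos h]
    exact Real.contDiff_exp.comp (ContinuousLinearMap.proj (R := ℝ) (φ := fun _ : Kdx p n => ℝ) (⟨i.1, ⟨i.2, h⟩⟩ : Kdx p n)).contDiff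
  · simp only [dif_neg h]
    exact contDiff_const

/-- the candidate inverse of `phi`. -/
def psi (x : Idx p n → ℝ) (k : Kdx p n) : ℝ := Real.log (x (inc k)) - Real.log (x (lst k))

lemma psi_phi (u : Kdx p n → ℝ) : psi (phi u) = u := by
  funext k
  rw [psi, phi_inc, phi_lst, Real.log_div (Real.exp_pos _).ne' (den_pos u k.1).ne',
    Real.log_div one_ne_zero (den_pos u k.1).ne', Real.log_exp, Real.log_one]
  ring

lemma isOpen_posSet : IsOpen {x : Idx p n → ℝ | ∀ i, 0 < x i} := by
  have : {x : Idx p n → ℝ | ∀ i, 0 < x i} = ⋂ i, {x | 0 < x i} := by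
    ext x; simp [Set.mem_iInter]
  rw [this]
  exact isOpen_iInter_of_finite fun i => isOpen_lt continuous_const (continuous_apply i)

lemma contDiffOn_psi : ContDiffOn ℝ (⊤ : ℕ∞) (psi (p := p) (n := n)) {x | ∀ i, 0 < x i} := by
  rw [contDiffOn_pi]
  intro k
  intro x hx
  apply ContDiffWithinAt.sub
  · exact ((Real.contDiffAt_log.2 (hx (inc k)).ne').comp x
      (ContinuousLinearMap.proj (R := ℝ) (φ := fun _ : Idx p n => ℝ) (inc k)).contDiff.contDiffAt).contDiffWithinAt
  · exact ((Real.contDiffAt_log.2 (hx (lst k)).ne').comp x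
      (ContinuousLinearMap.proj (R := ℝ) (φ := fun _ : Idx p n => ℝ) (lst k)).contDiff.contDiffAt).contDiffWithinAt

lemma phi_injective : Function.Injective (phi (p := p) (n := n)) := by
  intro u v h
  have := psi_phi (p := p) (n := n) u
  rw [h, psi_phi] at this
  exact this.symm

lemma range_phi (hn : ∀ α, 0 < n α) :
    Set.range (phi (p := p) (n := n)) = GammaInt p n := by
  ext x
  constructor
  · rintro ⟨u, rfl⟩
    exact ⟨fun i => phi_pos u i, fun α => sum_phi u α (hn α)⟩
  · rintro ⟨hpos, hsum⟩
    set L : (α : Fin p) → Idx p n := fun α => ⟨α, ⟨n α - 1, Nat.sub_lt (hn α) one_pos⟩⟩ with hL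
    refine ⟨fun k => Real.log (x (inc k) / x (L k.1)), ?_⟩
    funext i
    obtain ⟨α, j⟩ := i
    set u : Kdx p n → ℝ := fun k => Real.log (x (inc k) / x (L k.1)) with hu
    have hexp : ∀ k : Kdx p n, Real.exp (u k) = x (inc k) / x (L k.1) := by
      intro k
      exact Real.exp_log (div_pos (hpos _) (hpos _))
    have hsplit := sum_split (hn α) (fun j : Fin (n α) => x ⟨α, j⟩)
    rw [hsum α] at hsplit
    have hden : den u α = 1 / x (L α) := by
      rw [den]
      have : ∀ k : Fin (n α - 1), Real.exp (u ⟨α, k⟩) = x (inc ⟨α, k⟩) / x (L α) :=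
        fun k => hexp ⟨α, k⟩
      rw [Finset.sum_congr rfl fun k _ => this k, ← Finset.sum_div]
      have h2 : ∑ k : Fin (n α - 1), x (inc ⟨α, k⟩) = 1 - x (L α) := by
        have : ∀ k : Fin (n α - 1), x (inc ⟨α, k⟩) =
            x ⟨α, ⟨(k : ℕ), lt_of_lt_of_le k.isLt (Nat.sub_le (n α) 1)⟩⟩ := fun k => rfl
        rw [Finset.sum_congr rfl fun k _ => this k]
        linarith [hsplit]
      rw [h2]
      have hxL := (hpos (L α)).ne'
      field_simp
      ring
    by_cases hj : (j : ℕ) < n α - 1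
    · have : (⟨α, j⟩ : Idx p n) = inc ⟨α, ⟨j, hj⟩⟩ := rfl
      rw [this, phi_inc, hexp, hden]
      have hxL := hpos (L α)
      field_simp
    · have hjv : (j : ℕ) = n α - 1 := by have := j.isLt; omega
      have hLeq : (⟨α, j⟩ : Idx p n) = L α :=
        congrArg (fun t => (⟨α, t⟩ : Idx p n)) (Fin.ext hjv)
      rw [phi_eq, dif_neg (show ¬ (((⟨α, j⟩ : Idx p n).2 : ℕ) < n (⟨α, j⟩ : Idx p n).1 - 1) from hj),
        hden, hLeq, one_div_one_div]

end PolyAux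
namespace PolyAux
variable {p : ℕ} {n : Fin p → ℕ}

set_option maxHeartbeats 1000000 in
lemma hasFDerivAt_den (u : Kdx p n → ℝ) (α : Fin p) :
    HasFDerivAt (fun v : Kdx p n → ℝ => den v α)
      (∑ k2 : Fin (n α - 1), Real.exp (u ⟨α, k2⟩) •
        (ContinuousLinearMap.proj (⟨α, k2⟩ : Kdx p n) : (Kdx p n → ℝ) →L[ℝ] ℝ)) u := by
  have h : ∀ k2 : Fin (n α - 1), HasFDerivAt (fun v : Kdx p n → ℝ => Real.exp (v ⟨α, k2⟩))
      (Real.exp (u ⟨α, k2⟩) •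
        (ContinuousLinearMap.proj (⟨α, k2⟩ : Kdx p n) : (Kdx p n → ℝ) →L[ℝ] ℝ)) u := by
    intro k2
    have := (ContinuousLinearMap.proj (R := ℝ) (φ := fun _ : Kdx p n => ℝ)
      (⟨α, k2⟩ : Kdx p n)).hasFDerivAt (x := u)
    exact this.exp
  exact (HasFDerivAt.fun_sum fun k2 _ => h k2).const_add 1

lemma deriv_den_apply (u : Kdx p n → ℝ) (α : Fin p) (k : Kdx p n) :
    (∑ k2 : Fin (n α - 1), Real.exp (u ⟨α, k2⟩) •
        (ContinuousLinearMap.proj (⟨α, k2⟩ : Kdx p n) : (Kdx p n → ℝ) →L[ℝ] ℝ))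
      (Pi.single k 1) = if k.1 = α then Real.exp (u k) else 0 := by
  obtain ⟨β, c⟩ := k
  rw [ContinuousLinearMap.sum_apply]
  simp only [ContinuousLinearMap.smul_apply, ContinuousLinearMap.proj_apply, smul_eq_mul,
    Pi.single_apply, mul_ite, mul_one, mul_zero]
  by_cases hβ : β = α
  · subst hβ
    rw [if_pos rfl, Finset.sum_eq_single c]
    · rw [if_pos rfl]
    · intro k2 _ hne
      rw [if_neg]
      intro hc
      apply hne
      simpa using hc
    · intro hc
      exact absurd (Finset.mem_univ c) hc
  · rw [if_neg hβ]
    apply Finset.sum_eq_zero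
    intro k2 _
    rw [if_neg]
    intro hc
    exact hβ (congrArg Sigma.fst hc).symm

end PolyAux
namespace PolyAux
variable {p : ℕ} {n : Fin p → ℕ}

set_option maxHeartbeats 1000000 in
lemma Jphi_eq (u : Kdx p n → ℝ) (α : Fin p) (j : Fin (n α)) (k : Kdx p n) :
    Jphi u ⟨α, j⟩ k = phi u ⟨α, j⟩ *
      ((if k.1 = α ∧ (j : ℕ) = (k.2 : ℕ) then 1 else 0)
        - (if k.1 = α then Real.exp (u k) / den u α else 0)) := by
  have hd := den_pos u α
  set D' := ∑ k2 : Fin (n α - 1), Real.exp (u ⟨α, k2⟩) •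
      (ContinuousLinearMap.proj (⟨α, k2⟩ : Kdx p n) : (Kdx p n → ℝ) →L[ℝ] ℝ) with hD'
  have hInv : HasFDerivAt (fun v : Kdx p n → ℝ => (den v α)⁻¹)
      ((-(den u α ^ 2)⁻¹) • D') u :=
    (hasDerivAt_inv hd.ne').comp_hasFDerivAt u (hasFDerivAt_den u α)
  by_cases h : (j : ℕ) < n α - 1
  · set a : Kdx p n := ⟨α, ⟨j, h⟩⟩ with ha
    have hN : HasFDerivAt (fun v : Kdx p n → ℝ => Real.exp (v a))
        (Real.exp (u a) • (ContinuousLinearMap.proj a : (Kdx p n → ℝ) →L[ℝ] ℝ)) u :=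
      ((ContinuousLinearMap.proj (R := ℝ) (φ := fun _ : Kdx p n => ℝ) a).hasFDerivAt (x := u)).exp
    have hMul := hN.mul hInv
    have hfun : (fun v : Kdx p n → ℝ => phi v ⟨α, j⟩)
        = fun v => Real.exp (v a) * (den v α)⁻¹ := by
      funext v
      rw [phi_eq, dif_pos h, div_eq_mul_inv]
    have hfd : fderiv ℝ (fun v : Kdx p n → ℝ => phi v ⟨α, j⟩) u
        = Real.exp (u a) • ((-(den u α ^ 2)⁻¹) • D')
          + (den u α)⁻¹ • (Real.exp (u a) • (ContinuousLinearMap.proj a : (Kdx p n → ℝ) →L[ℝ] ℝ)) := by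
      rw [hfun]
      exact hMul.fderiv
    rw [Jphi, hfd]
    simp only [ContinuousLinearMap.add_apply, ContinuousLinearMap.smul_apply,
      ContinuousLinearMap.proj_apply]
    rw [hD', deriv_den_apply, phi_eq, dif_pos h]
    obtain ⟨β, c⟩ := k
    simp only [smul_eq_mul, Pi.single_apply]
    by_cases hβ : β = α
    · subst hβ
      simp only [eq_self_iff_true, true_and, if_true]
      by_cases hjc : (j : ℕ) = (c : ℕ)
      · have hac : a = (⟨β, c⟩ : Kdx p n) := by
          rw [ha]
          exact congrArg (fun t => (⟨β, t⟩ : Kdx p n)) (Fin.ext hjc)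
        rw [if_pos hac, if_pos hjc]
        field_simp
        ring
      · have hac : ¬ a = (⟨β, c⟩ : Kdx p n) := by
          intro hc
          apply hjc
          have h2 := congrArg (fun t : Kdx p n => (t.2 : ℕ)) hc
          simpa [ha] using h2
        rw [if_neg hac, if_neg hjc]
        field_simp
        ring
    · have h1 : ¬ (β = α ∧ (j : ℕ) = (c : ℕ)) := fun hc => hβ hc.1
      have hac : ¬ a = (⟨β, c⟩ : Kdx p n) := by
        intro hc
        exact hβ (congrArg (fun t : Kdx p n => t.1) hc).symm
      rw [if_neg hβ, if_neg h1, if_neg hβ, if_neg hac]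
      ring
  · have hfun : (fun v : Kdx p n → ℝ => phi v ⟨α, j⟩) = fun v => (den v α)⁻¹ := by
      funext v
      rw [phi_eq, dif_neg h, one_div]
    have hfd : fderiv ℝ (fun v : Kdx p n → ℝ => phi v ⟨α, j⟩) u
        = (-(den u α ^ 2)⁻¹) • D' := by
      rw [hfun]
      exact hInv.fderiv
    rw [Jphi, hfd]
    simp only [ContinuousLinearMap.smul_apply]
    rw [hD', deriv_den_apply, phi_eq, dif_neg h]
    obtain ⟨β, c⟩ := k
    simp only [smul_eq_mul]
    by_cases hβ : β = α
    · subst hβ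
      have h1 : ¬ (β = β ∧ (j : ℕ) = (c : ℕ)) := by
        have := c.isLt
        omega
      rw [if_pos rfl, if_neg h1, if_pos rfl]
      field_simp
      ring
    · have h1 : ¬ (β = α ∧ (j : ℕ) = (c : ℕ)) := fun hc => hβ hc.1
      rw [if_neg hβ, if_neg h1, if_neg hβ]
      ring

end PolyAux
namespace PolyAux
variable {p : ℕ} {n : Fin p → ℕ}

set_option maxHeartbeats 1000000 in
lemma JE (u : Kdx p n → ℝ) :
    Jphi u * Emat (p := p) (n := n) = Tmat (phi u) * Matrix.diagonal (phi u) := by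
  apply Matrix.ext
  rintro ⟨α, j⟩ ⟨β, c⟩
  rw [Matrix.mul_apply, Matrix.mul_diagonal]
  have hd := den_pos u α
  by_cases hαβ : α = β
  · subst hαβ
    rw [← Finset.univ_sigma_univ, Finset.sum_sigma]
    rw [Finset.sum_eq_single α]
    · -- inner sum over k2 : Fin (n α - 1)
      have hE : ∀ k2 : Fin (n α - 1), Emat (⟨α, k2⟩ : Kdx p n) (⟨α, c⟩ : Idx p n)
          = (if (c : ℕ) = n α - 1 then 1 else if (c : ℕ) = (k2 : ℕ) then -1 else 0) := by
        intro k2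
        rw [Emat, if_pos rfl]
      have hJ : ∀ k2 : Fin (n α - 1), Jphi u ⟨α, j⟩ ⟨α, k2⟩
          = phi u ⟨α, j⟩ * ((if (j : ℕ) = (k2 : ℕ) then 1 else 0)
            - Real.exp (u ⟨α, k2⟩) / den u α) := by
        intro k2
        rw [Jphi_eq, if_pos rfl]
        by_cases hjv : (j : ℕ) = (k2 : ℕ)
        · rw [if_pos ⟨rfl, hjv⟩, if_pos hjv]
        · rw [if_neg (fun hc => hjv hc.2), if_neg hjv]
      have hT : Tmat (phi u) (⟨α, j⟩ : Idx p n) (⟨α, c⟩ : Idx p n)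
          = phi u ⟨α, j⟩ - (if (j : ℕ) = (c : ℕ) then 1 else 0) := by
        rw [Tmat, if_pos rfl]
        congr 1
        by_cases hjc : (j : ℕ) = (c : ℕ)
        · rw [if_pos hjc, if_pos (congrArg (fun t => (⟨α, t⟩ : Idx p n)) (Fin.ext hjc))]
        · rw [if_neg hjc, if_neg (fun hc => hjc (congrArg (fun t : Idx p n => (t.2 : ℕ)) hc))]
      by_cases hc : (c : ℕ) = n α - 1
      · -- j-th column: E entry is 1
        have h1 : ∀ k2 : Fin (n α - 1), Jphi u ⟨α, j⟩ ⟨α, k2⟩ * Emat (⟨α, k2⟩ : Kdx p n) ⟨α, c⟩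
            = phi u ⟨α, j⟩ * (if (j : ℕ) = (k2 : ℕ) then 1 else 0)
              - phi u ⟨α, j⟩ * Real.exp (u ⟨α, k2⟩) / den u α := by
          intro k2
          rw [hE, hJ, if_pos hc]
          ring
        rw [Finset.sum_congr rfl fun k2 _ => h1 k2, Finset.sum_sub_distrib, ← Finset.mul_sum]
        have hsumI : ∑ k2 : Fin (n α - 1), (if (j : ℕ) = (k2 : ℕ) then (1 : ℝ) else 0)
            = if (j : ℕ) < n α - 1 then 1 else 0 := by
          by_cases hj : (j : ℕ) < n α - 1
          · rw [if_pos hj, Finset.sum_eq_single (⟨(j : ℕ), hj⟩ : Fin (n α - 1))]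
            · rw [if_pos rfl]
            · intro k2 _ hne
              rw [if_neg]
              intro hv
              exact hne (Fin.ext hv.symm)
            · intro hmem
              exact absurd (Finset.mem_univ _) hmem
          · rw [if_neg hj]
            apply Finset.sum_eq_zero
            intro k2 _
            rw [if_neg]
            have := k2.isLt
            omega
        have hsume : ∑ k2 : Fin (n α - 1), phi u ⟨α, j⟩ * Real.exp (u ⟨α, k2⟩) / den u α
            = phi u ⟨α, j⟩ * (den u α - 1) / den u α := by
          rw [← Finset.sum_div, ← Finset.mul_sum]
          congr 2
          rw [den]
          ring
        rw [hsumI, hsume, hT]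
        have hphic : phi u (⟨α, c⟩ : Idx p n) = 1 / den u α := by
          rw [phi_eq, dif_neg (show ¬ ((c : ℕ) < n α - 1) by omega)]
        rw [hphic]
        by_cases hj : (j : ℕ) < n α - 1
        · rw [if_pos hj, if_neg (by omega)]
          field_simp
          ring
        · rw [if_neg hj, if_pos (by have := j.isLt; omega)]
          have hphij : phi u (⟨α, j⟩ : Idx p n) = 1 / den u α := by
            rw [phi_eq, dif_neg hj]
          rw [hphij]
          field_simp
          ring
      · -- c < n α - 1 column
        have hc' : (c : ℕ) < n α - 1 := by have := c.isLt; omega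
        rw [Finset.sum_eq_single (⟨(c : ℕ), hc'⟩ : Fin (n α - 1))]
        · rw [hE, hJ, if_neg hc, if_pos rfl]
          have hphic : phi u (⟨α, c⟩ : Idx p n)
              = Real.exp (u ⟨α, ⟨(c : ℕ), hc'⟩⟩) / den u α := by
            rw [phi_eq, dif_pos (show ((⟨α, c⟩ : Idx p n).2 : ℕ) < n α - 1 from hc')]
          rw [hT, ← hphic]
          by_cases hjc : (j : ℕ) = (c : ℕ)
          · have : (⟨α, j⟩ : Idx p n) = ⟨α, c⟩ :=
              congrArg (fun t => (⟨α, t⟩ : Idx p n)) (Fin.ext hjc)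
            rw [if_pos hjc, this]
            ring
          · rw [if_neg hjc]
            ring
        · intro k2 _ hne
          rw [hE, if_neg hc, if_neg, mul_zero]
          intro hv
          exact hne (Fin.ext hv.symm)
        · intro hmem
          exact absurd (Finset.mem_univ _) hmem
    · -- groups γ ≠ α contribute zero
      intro γ _ hγ
      apply Finset.sum_eq_zero
      intro k2 _
      rw [Jphi_eq, if_neg (fun hc => hγ hc.1), if_neg hγ]
      ring
    · intro hmem
      exact absurd (Finset.mem_univ _) hmem
  · -- α ≠ β : both sides vanish
    have hT : Tmat (phi u) (⟨α, j⟩ : Idx p n) (⟨β, c⟩ : Idx p n) = 0 := by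
      rw [Tmat, if_neg hαβ, if_neg]
      · ring
      · intro hc
        exact hαβ (congrArg (fun t : Idx p n => t.1) hc)
    rw [hT, zero_mul]
    apply Finset.sum_eq_zero
    rintro ⟨γ, k2⟩ _
    by_cases hγ : γ = α
    · subst hγ
      have hE : Emat (⟨γ, k2⟩ : Kdx p n) (⟨β, c⟩ : Idx p n) = 0 := by
        rw [Emat, if_neg hαβ]
      rw [hE, mul_zero]
    · rw [Jphi_eq, if_neg (fun hc => hγ hc.1), if_neg hγ]
      ring

end PolyAux
/-- For skew-symmetric `A` and `B = -E A Eᵀ`, the map `φ` is a smooth diffeomorphism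
from `ℝ^{n-p}` onto the relative interior `Γ°_n̲` (smooth, injective, with range `Γ°_n̲`
and a smooth inverse defined on a neighbourhood of `Γ°_n̲`), and it is a Poisson map:
`(d_uφ) B (d_uφ)ᵀ = π_A(φ(u))` for every `u`. -/
theorem stmt7 {p : ℕ} {n : Fin p → ℕ} (hn : ∀ α, 0 < n α)
    (A : Matrix (Idx p n) (Idx p n) ℝ) (hA : Aᵀ = -A)
    (B : Matrix (Kdx p n) (Kdx p n) ℝ) (hB : B = -(Emat (p := p) (n := n) * A * (Emat (p := p) (n := n))ᵀ)) :
    ContDiff ℝ (⊤ : ℕ∞) (phi (p := p) (n := n)) ∧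
    Function.Injective (phi (p := p) (n := n)) ∧
    Set.range (phi (p := p) (n := n)) = GammaInt p n ∧
    (∃ (U : Set (Idx p n → ℝ)) (ψ : (Idx p n → ℝ) → Kdx p n → ℝ),
      IsOpen U ∧ GammaInt p n ⊆ U ∧ ContDiffOn ℝ (⊤ : ℕ∞) ψ U ∧ ∀ u, ψ (phi u) = u) ∧
    (∀ u : Kdx p n → ℝ,
      Jphi u * B * (Jphi u)ᵀ = piA A (phi u)) := by
  refine ⟨PolyAux.contDiff_phi, PolyAux.phi_injective, PolyAux.range_phi hn, ?_, ?_⟩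
  · refine ⟨{x | ∀ i, 0 < x i}, PolyAux.psi, PolyAux.isOpen_posSet, ?_,
      PolyAux.contDiffOn_psi, PolyAux.psi_phi⟩
    intro x hx
    exact hx.1
  · intro u
    have hJE : Jphi u * Emat (p := p) (n := n) = Tmat (phi u) * Matrix.diagonal (phi u) := PolyAux.JE u
    rw [hB]
    have h1 : Jphi u * (-(Emat (p := p) (n := n) * A * (Emat (p := p) (n := n))ᵀ) : Matrix (Kdx p n) (Kdx p n) ℝ) * (Jphi u)ᵀ
        = -((Jphi u * Emat (p := p) (n := n)) * (A * ((Emat (p := p) (n := n))ᵀ * (Jphi u)ᵀ))) := by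
      simp only [Matrix.mul_neg, Matrix.neg_mul, Matrix.mul_assoc]
    rw [h1, hJE]
    have h2 : (Emat (p := p) (n := n))ᵀ * (Jphi u)ᵀ = (Tmat (phi u) * Matrix.diagonal (phi u))ᵀ := by
      rw [← Matrix.transpose_mul, hJE]
    rw [h2, piA]
    rw [Matrix.transpose_mul, Matrix.diagonal_transpose]
    simp only [Matrix.mul_assoc]
end
end

section
/- If A ∈ Mat_{n×n}(ℝ) is skew-symmetric and q ∈ ℝ^n is a formal equilibrium of (n̲,A), then the function H(x) = Σ_{i=1}^n q_i log x_i is a constant of motion for the polymatrix replicator in the interior of the phase space: for every x ∈ Γ°_n̲, Σ_{i=1}^n (q_i/x_i) · X_{(n̲,A)}(x)_i = 0, i.e. the derivative of H along the vector field X_{(n̲,A)} vanishes on Γ°_n̲. -/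
open Matrix

noncomputable section

/- Along the field, `Σ_i (q_i/x_i) X(x)_i = q·Ax − Σ_α (Σ_{k∈α} q_k) (x^α)ᵗ(Ax)^α = q·Ax − x·Ax`,
since `q` has unit group sums. Skew-symmetry kills `x·Ax` and turns `q·Ax` into `−x·Aq`.
As `Aq` is constant on each group and both `x` and `q` have unit group sums, `x·Aq = q·Aq`,
which vanishes by skew-symmetry again. -/

section SkewSymmetric

variable {ι R : Type*} [Fintype ι] [CommRing R] {A : Matrix ι ι R}

theorem dotProduct_mulVec_eq_neg_of_transpose_eq_neg (hA : Aᵀ = -A) (u v : ι → R) :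
    u ⬝ᵥ A *ᵥ v = -(v ⬝ᵥ A *ᵥ u) := by
  rw [dotProduct_mulVec, ← mulVec_transpose, hA, neg_mulVec, neg_dotProduct, dotProduct_comm]

theorem dotProduct_mulVec_self_eq_zero_of_transpose_eq_neg [IsDomain R] [CharZero R]
    (hA : Aᵀ = -A) (v : ι → R) : v ⬝ᵥ A *ᵥ v = 0 :=
  self_eq_neg.mp (dotProduct_mulVec_eq_neg_of_transpose_eq_neg hA v v)

end SkewSymmetric

theorem Finset.sum_mul_eq_sum_mul_of_eq_on {ι R : Type*} [CommSemiring R] {s : Finset ι}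
    {w v z : ι → R} (hz : ∀ i ∈ s, ∀ j ∈ s, z i = z j) (hw : ∑ i ∈ s, w i = 1)
    (hv : ∑ i ∈ s, v i = 1) : ∑ i ∈ s, w i * z i = ∑ i ∈ s, v i * z i := by
  have hc : ∀ i ∈ s, z i = ∑ j ∈ s, v j * z j := fun i hi =>
    calc z i = ∑ j ∈ s, v j * z i := by rw [← Finset.sum_mul, hv, one_mul]
      _ = ∑ j ∈ s, v j * z j := Finset.sum_congr rfl fun j hj => by rw [hz i hi j hj]
  calc ∑ i ∈ s, w i * z i = ∑ i ∈ s, w i * ∑ j ∈ s, v j * z j :=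
        Finset.sum_congr rfl fun i hi => by rw [← hc i hi]
    _ = ∑ j ∈ s, v j * z j := by rw [← Finset.sum_mul, hw, one_mul]

section Polymatrix

variable {p : ℕ} {n : Fin p → ℕ}

theorem FormalEq.dotProduct_mulVec_eq {A : Matrix (Idx p n) (Idx p n) ℝ} {q : Idx p n → ℝ}
    (hq : FormalEq A q) {w : Idx p n → ℝ} (hw : ∀ α, ∑ k : Fin (n α), w ⟨α, k⟩ = 1) :
    w ⬝ᵥ A *ᵥ q = q ⬝ᵥ A *ᵥ q := by
  simp only [dotProduct, Fintype.sum_sigma]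
  exact Finset.sum_congr rfl fun α _ =>
    Finset.sum_mul_eq_sum_mul_of_eq_on (fun i _ j _ => hq.1 α i j) (hw α) (hq.2 α)

theorem sum_mul_sum_group_eq_dotProduct {w : Idx p n → ℝ}
    (hw : ∀ α, ∑ k : Fin (n α), w ⟨α, k⟩ = 1) (x y : Idx p n → ℝ) :
    ∑ i, w i * ∑ k : Fin (n i.1), x ⟨i.1, k⟩ * y ⟨i.1, k⟩ = x ⬝ᵥ y := by
  rw [dotProduct, Fintype.sum_sigma, Fintype.sum_sigma]
  refine Finset.sum_congr rfl fun α _ => ?_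
  calc ∑ k, w ⟨α, k⟩ * ∑ j : Fin (n α), x ⟨α, j⟩ * y ⟨α, j⟩
      = (∑ k, w ⟨α, k⟩) * ∑ j : Fin (n α), x ⟨α, j⟩ * y ⟨α, j⟩ := (Finset.sum_mul ..).symm
    _ = ∑ j, x ⟨α, j⟩ * y ⟨α, j⟩ := by rw [hw α, one_mul]

theorem sum_div_mul_replicator (A : Matrix (Idx p n) (Idx p n) ℝ) {q x : Idx p n → ℝ}
    (hq : ∀ α, ∑ k : Fin (n α), q ⟨α, k⟩ = 1) (hx : ∀ i, x i ≠ 0) :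
    ∑ i, q i / x i * replicator A x i = q ⬝ᵥ A *ᵥ x - x ⬝ᵥ A *ᵥ x := by
  have hterm : ∀ i, q i / x i * replicator A x i =
      q i * (A *ᵥ x) i - q i * ∑ k : Fin (n i.1), x ⟨i.1, k⟩ * (A *ᵥ x) ⟨i.1, k⟩ := fun i => by
    rw [replicator]
    field_simp [hx i]
  rw [Finset.sum_congr rfl fun i _ => hterm i, Finset.sum_sub_distrib,
    sum_mul_sum_group_eq_dotProduct hq]
  rfl

end Polymatrix

theorem stmt11_general {p : ℕ} {n : Fin p → ℕ}
    (A : Matrix (Idx p n) (Idx p n) ℝ) (hA : Aᵀ = -A)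
    (q : Idx p n → ℝ) (hq : FormalEq A q)
    (x : Idx p n → ℝ) (hx : x ∈ GammaInt p n) :
    ∑ i : Idx p n, (q i / x i) * replicator A x i = 0 := by
  rw [sum_div_mul_replicator A hq.2 fun i => (hx.1 i).ne',
    dotProduct_mulVec_self_eq_zero_of_transpose_eq_neg hA x,
    dotProduct_mulVec_eq_neg_of_transpose_eq_neg hA q x, hq.dotProduct_mulVec_eq hx.2,
    dotProduct_mulVec_self_eq_zero_of_transpose_eq_neg hA q]
  simp

/-- If `A` is skew-symmetric and `q` a formal equilibrium of `(n̲,A)`, then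
`H(x) = Σ_i q_i log x_i` is a constant of motion on `Γ°_n̲`: the derivative of `H`
along `X_{(n̲,A)}`, namely `Σ_i (q_i/x_i) X_{(n̲,A)}(x)_i`, vanishes. -/
theorem stmt11 {p : ℕ} {n : Fin p → ℕ} (hn : ∀ α, 0 < n α)
    (A : Matrix (Idx p n) (Idx p n) ℝ) (hA : Aᵀ = -A)
    (q : Idx p n → ℝ) (hq : FormalEq A q)
    (x : Idx p n → ℝ) (hx : x ∈ GammaInt p n) :
    ∑ i : Idx p n, (q i / x i) * replicator A x i = 0 :=
  stmt11_general A hA q hq x hx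
end
end

section
/- Let A_0 ∈ Mat_{n×n}(ℝ) be skew-symmetric, n̲ a signature, and q̃ ∈ ℝ^n a point such that (A_0 q̃)_i = (A_0 q̃)_j for all i,j in the same group α, and λ_α := Σ_{j∈α} q̃_j ≠ 0 for every group α. Set D = diag(λ_1 I_{n_1},…,λ_p I_{n_p}). Then q = D^{−1} q̃ is a formal equilibrium of the polymatrix game (n̲, A_0 D); consequently (n̲, A_0 D) is a conservative polymatrix game with skew-symmetric model A_0 and scaling vector (λ_1,…,λ_p). -/
open Matrix

noncomputable section

/-- Every block `M^{α,β}` of `M` (in the block decomposition induced by the signature)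
has all of its rows equal. -/
def EqualRows {p : ℕ} {n : Fin p → ℕ} (M : Matrix (Idx p n) (Idx p n) ℝ) : Prop :=
  ∀ (α β : Fin p) (i i' : Fin (n α)) (j : Fin (n β)), M ⟨α, i⟩ ⟨β, j⟩ = M ⟨α, i'⟩ ⟨β, j⟩

/-- A polymatrix game `(n̲,A)` is conservative iff it has a formal equilibrium and
`A ∼ A₀ D` for some skew-symmetric `A₀` and `D = diag(λ_1 I_{n_1},…,λ_p I_{n_p})`
with all `λ_β ≠ 0`. -/
def IsConservative {p : ℕ} {n : Fin p → ℕ} (A : Matrix (Idx p n) (Idx p n) ℝ) : Prop :=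
  (∃ q : Idx p n → ℝ, FormalEq A q) ∧
  ∃ (A₀ : Matrix (Idx p n) (Idx p n) ℝ) (lam : Fin p → ℝ),
    A₀ᵀ = -A₀ ∧ (∀ β, lam β ≠ 0) ∧
      EqualRows (A - A₀ * Matrix.diagonal (fun i => lam i.1))

/-! Because `D` acts by a nonzero scalar on each block, `(A₀D)(D⁻¹q̃) = A₀q̃`, so the
equal-payoff condition passes from `q̃` to `D⁻¹q̃`, and `Σ_{j∈α} q̃_j / λ_α = 1` is the
definition of `λ_α`. Conservativity is then witnessed by `A₀` and `λ` themselves. -/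

theorem Matrix.diagonal_mulVec_div {ι K : Type*} [Fintype ι] [DecidableEq ι] [Field K]
    {d : ι → K} (hd : ∀ i, d i ≠ 0) (v : ι → K) :
    diagonal d *ᵥ (fun i => v i / d i) = v := by
  funext i
  rw [mulVec_diagonal, mul_div_cancel₀ (v i) (hd i)]

theorem equalRows_zero {p : ℕ} {n : Fin p → ℕ} :
    EqualRows (0 : Matrix (Idx p n) (Idx p n) ℝ) :=
  fun _ _ _ _ _ => rfl

theorem formalEq_mul_diagonal_div {p : ℕ} {n : Fin p → ℕ} {A₀ : Matrix (Idx p n) (Idx p n) ℝ}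
    {qt : Idx p n → ℝ}
    (heq : ∀ (α : Fin p) (i j : Fin (n α)), (A₀ *ᵥ qt) ⟨α, i⟩ = (A₀ *ᵥ qt) ⟨α, j⟩)
    {lam : Fin p → ℝ} (hlam : ∀ α, lam α = ∑ j : Fin (n α), qt ⟨α, j⟩)
    (hne : ∀ α, lam α ≠ 0) :
    FormalEq (A₀ * diagonal (fun i => lam i.1)) (fun i => qt i / lam i.1) := by
  have hpayoff : (A₀ * diagonal (fun i => lam i.1)) *ᵥ (fun i => qt i / lam i.1) = A₀ *ᵥ qt := by
    rw [← mulVec_mulVec, diagonal_mulVec_div (fun i : Idx p n => hne i.1)]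
  refine ⟨fun α i j => by simpa only [hpayoff] using heq α i j, fun α => ?_⟩
  show ∑ j, qt ⟨α, j⟩ / lam α = 1
  rw [← Finset.sum_div, ← hlam, div_self (hne α)]

theorem isConservative_mul_diagonal {p : ℕ} {n : Fin p → ℕ} {A₀ : Matrix (Idx p n) (Idx p n) ℝ}
    (hA₀ : A₀ᵀ = -A₀) {lam : Fin p → ℝ} (hne : ∀ α, lam α ≠ 0) {q : Idx p n → ℝ}
    (hq : FormalEq (A₀ * diagonal (fun i => lam i.1)) q) :
    IsConservative (A₀ * diagonal (fun i => lam i.1)) :=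
  ⟨⟨q, hq⟩, A₀, lam, hA₀, hne, by rw [sub_self]; exact equalRows_zero⟩

theorem stmt12_general {p : ℕ} {n : Fin p → ℕ}
    (A₀ : Matrix (Idx p n) (Idx p n) ℝ) (hA₀ : A₀ᵀ = -A₀)
    (qt : Idx p n → ℝ)
    (heq : ∀ (α : Fin p) (i j : Fin (n α)),
      A₀.mulVec qt ⟨α, i⟩ = A₀.mulVec qt ⟨α, j⟩)
    (lam : Fin p → ℝ) (hlam : ∀ α, lam α = ∑ j : Fin (n α), qt ⟨α, j⟩)
    (hne : ∀ α, lam α ≠ 0) :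
    FormalEq (A₀ * Matrix.diagonal (fun i => lam i.1)) (fun i => qt i / lam i.1) ∧
    IsConservative (A₀ * Matrix.diagonal (fun i => lam i.1)) := by
  have hq := formalEq_mul_diagonal_div heq hlam hne
  exact ⟨hq, isConservative_mul_diagonal hA₀ hne hq⟩

/-- If `A₀` is skew-symmetric, `(A₀q̃)_i = (A₀q̃)_j` within each group, and
`λ_α = Σ_{j∈α} q̃_j ≠ 0`, then with `D = diag(λ_1 I_{n_1},…,λ_p I_{n_p})`, the point
`q = D⁻¹q̃` is a formal equilibrium of `(n̲, A₀D)`; consequently `(n̲, A₀D)` is a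
conservative polymatrix game. -/
theorem stmt12 {p : ℕ} {n : Fin p → ℕ} (hn : ∀ α, 0 < n α)
    (A₀ : Matrix (Idx p n) (Idx p n) ℝ) (hA₀ : A₀ᵀ = -A₀)
    (qt : Idx p n → ℝ)
    (heq : ∀ (α : Fin p) (i j : Fin (n α)),
      A₀.mulVec qt ⟨α, i⟩ = A₀.mulVec qt ⟨α, j⟩)
    (lam : Fin p → ℝ) (hlam : ∀ α, lam α = ∑ j : Fin (n α), qt ⟨α, j⟩)
    (hne : ∀ α, lam α ≠ 0) :
    FormalEq (A₀ * Matrix.diagonal (fun i => lam i.1)) (fun i => qt i / lam i.1) ∧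
    IsConservative (A₀ * Matrix.diagonal (fun i => lam i.1)) :=
  stmt12_general A₀ hA₀ qt heq lam hlam hne
end
end

section
/- Let (n̲,A) be a conservative polymatrix game with formal equilibrium q, skew-symmetric model A_0 and scaling vector (λ_1,…,λ_p) (i.e. every block of A − A_0 D has equal rows, where D = diag(λ_1 I_{n_1},…,λ_p I_{n_p})). Then the polymatrix replicator is Hamiltonian in Γ°_n̲ with respect to π_{A_0}: for every x ∈ Γ°_n̲, X_{(n̲,A)}(x) = π_{A_0}(x) ∇H(x), where H(x) = Σ_{β=1}^p λ_β Σ_{j∈β} q_j log x_j (so ∇H(x)_j = λ_β q_j/x_j for j in group β). -/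
open Matrix

noncomputable section

/-!
Since `q` sums to one on every group, `D_x T_xᵀ ∇H(x) = D_λ (x - q)`. Writing `A₀ D_λ = A - C`
with `C` having equal rows in every block gives `A₀ D_λ (x - q) = A x - (A q + C (x - q))`, and the
subtracted vector is constant on every group because `q` is a formal equilibrium. For `x ∈ Γ_n̲`
the matrix `T_x D_x` annihilates group-wise constant vectors, while `-T_x D_x A x` is exactly the
replicator field.
-/

section

variable {p : ℕ} {n : Fin p → ℕ}

def IsBlockConst (f : Idx p n → ℝ) : Prop :=
  ∀ (α : Fin p) (i j : Fin (n α)), f ⟨α, i⟩ = f ⟨α, j⟩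

theorem IsBlockConst.add {f g : Idx p n → ℝ} (hf : IsBlockConst f) (hg : IsBlockConst g) :
    IsBlockConst (f + g) := fun α i j => by
  simp only [Pi.add_apply, hf α i j, hg α i j]

theorem EqualRows.isBlockConst_mulVec {M : Matrix (Idx p n) (Idx p n) ℝ} (hM : EqualRows M)
    (v : Idx p n → ℝ) : IsBlockConst (M *ᵥ v) := fun α i i' => by
  simp only [mulVec, dotProduct]
  exact Finset.sum_congr rfl fun j _ => by rw [hM α j.1 i i' j.2]

theorem sum_ite_fst_eq (f : Idx p n → ℝ) (α : Fin p) :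
    ∑ j : Idx p n, (if j.1 = α then f j else 0) = ∑ k : Fin (n α), f ⟨α, k⟩ := by
  rw [Fintype.sum_sigma, Finset.sum_eq_single α (fun β _ h => by simp [h]) (by simp)]
  simp

theorem Tmat_mulVec_apply (x z : Idx p n → ℝ) (i : Idx p n) :
    (Tmat x *ᵥ z) i = x i * ∑ k : Fin (n i.1), z ⟨i.1, k⟩ - z i := by
  simp only [mulVec, dotProduct, Tmat, sub_mul, ite_mul, one_mul, zero_mul,
    Finset.sum_sub_distrib, Finset.sum_ite_eq, Finset.mem_univ, if_true]
  simp_rw [eq_comm (a := i.1)]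
  rw [sum_ite_fst_eq (fun j => x i * z j), Finset.mul_sum]

theorem Tmat_transpose_mulVec_apply (x v : Idx p n → ℝ) (j : Idx p n) :
    ((Tmat x)ᵀ *ᵥ v) j = ∑ k : Fin (n j.1), x ⟨j.1, k⟩ * v ⟨j.1, k⟩ - v j := by
  simp only [mulVec, dotProduct, transpose_apply, Tmat, sub_mul, ite_mul, one_mul, zero_mul,
    Finset.sum_sub_distrib, Finset.sum_ite_eq', Finset.mem_univ, if_true]
  rw [sum_ite_fst_eq (fun i => x i * v i)]

theorem replicator_eq_neg_Tmat_mul_diagonal_mulVec (A : Matrix (Idx p n) (Idx p n) ℝ)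
    (x : Idx p n → ℝ) : replicator A x = -((Tmat x * diagonal x) *ᵥ (A *ᵥ x)) := by
  ext i
  rw [← mulVec_mulVec, Pi.neg_apply, Tmat_mulVec_apply]
  simp only [mulVec_diagonal, replicator]
  ring

theorem Tmat_mul_diagonal_mulVec_eq_zero {x c : Idx p n → ℝ}
    (hx : ∀ α : Fin p, ∑ k : Fin (n α), x ⟨α, k⟩ = 1) (hc : IsBlockConst c) :
    (Tmat x * diagonal x) *ᵥ c = 0 := by
  ext ⟨α, i⟩
  rw [← mulVec_mulVec, Tmat_mulVec_apply]
  simp only [mulVec_diagonal, hc α _ i, ← Finset.sum_mul, hx α, Pi.zero_apply]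
  ring

theorem diagonal_mulVec_Tmat_transpose_mulVec_gradient {x q : Idx p n → ℝ}
    (hx : ∀ j, x j ≠ 0) (hq : ∀ α : Fin p, ∑ k : Fin (n α), q ⟨α, k⟩ = 1) (lam : Fin p → ℝ) :
    diagonal x *ᵥ ((Tmat x)ᵀ *ᵥ fun j => lam j.1 * q j / x j) =
      diagonal (fun j => lam j.1) *ᵥ (x - q) := by
  ext j
  have hxv : ∀ k, x k * (lam k.1 * q k / x k) = lam k.1 * q k := fun k =>
    mul_div_cancel₀ _ (hx k)
  rw [mulVec_diagonal, mulVec_diagonal, Tmat_transpose_mulVec_apply]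
  simp only [hxv, ← Finset.mul_sum, hq, Pi.sub_apply]
  rw [mul_sub, hxv]
  ring

end

theorem stmt14_general {p : ℕ} {n : Fin p → ℕ}
    (A A₀ : Matrix (Idx p n) (Idx p n) ℝ) (q : Idx p n → ℝ) (lam : Fin p → ℝ)
    (hq : FormalEq A q)
    (hcons : EqualRows (A - A₀ * Matrix.diagonal (fun i => lam i.1)))
    (x : Idx p n → ℝ) (hx : x ∈ GammaInt p n) (i : Idx p n) :
    replicator A x i = (piA A₀ x).mulVec (fun j => lam j.1 * q j / x j) i := by
  generalize hC : A - A₀ * diagonal (fun i => lam i.1) = C at hcons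
  have hsplit : A₀ *ᵥ (diagonal (fun i => lam i.1) *ᵥ (x - q)) =
      A *ᵥ x - (A *ᵥ q + C *ᵥ (x - q)) := by
    rw [mulVec_mulVec, ← hC, sub_mulVec, mulVec_sub, mulVec_sub]
    abel
  have hconst : IsBlockConst (A *ᵥ q + C *ᵥ (x - q)) :=
    IsBlockConst.add hq.1 (hcons.isBlockConst_mulVec _)
  have hgrad := diagonal_mulVec_Tmat_transpose_mulVec_gradient (fun j => (hx.1 j).ne') hq.2 lam
  suffices replicator A x = piA A₀ x *ᵥ fun j => lam j.1 * q j / x j from congrFun this i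
  calc replicator A x = -((Tmat x * diagonal x) *ᵥ (A *ᵥ x)) :=
        replicator_eq_neg_Tmat_mul_diagonal_mulVec A x
    _ = -((Tmat x * diagonal x) *ᵥ (A *ᵥ x - (A *ᵥ q + C *ᵥ (x - q)))) := by
        rw [mulVec_sub, Tmat_mul_diagonal_mulVec_eq_zero hx.2 hconst, sub_zero]
    _ = -((Tmat x * diagonal x) *ᵥ (A₀ *ᵥ (diagonal (fun i => lam i.1) *ᵥ (x - q)))) := by
        rw [hsplit]
    _ = piA A₀ x *ᵥ fun j => lam j.1 * q j / x j := by
        rw [← hgrad, piA]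
        simp only [mulVec_mulVec, Matrix.mul_assoc, neg_mulVec]

/-- For a conservative polymatrix game `(n̲,A)` with formal equilibrium `q`,
skew-symmetric model `A₀` and scaling vector `λ`, the replicator field is Hamiltonian
in `Γ°_n̲` w.r.t. `π_{A₀}`, with Hamiltonian `H(x) = Σ_β λ_β Σ_{j∈β} q_j log x_j`,
whose gradient has components `λ_β q_j / x_j` for `j ∈ β`. -/
theorem stmt14 {p : ℕ} {n : Fin p → ℕ} (hn : ∀ α, 0 < n α)
    (A A₀ : Matrix (Idx p n) (Idx p n) ℝ) (q : Idx p n → ℝ) (lam : Fin p → ℝ)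
    (hq : FormalEq A q) (hA₀ : A₀ᵀ = -A₀) (hlam : ∀ β, lam β ≠ 0)
    (hcons : EqualRows (A - A₀ * Matrix.diagonal (fun i => lam i.1)))
    (x : Idx p n → ℝ) (hx : x ∈ GammaInt p n) (i : Idx p n) :
    replicator A x i = (piA A₀ x).mulVec (fun j => lam j.1 * q j / x j) i :=
  stmt14_general A A₀ q lam hq hcons x hx i
end
end

section
/- Let A ∈ Mat_{n×n}(ℝ) be skew-symmetric. For ξ,η ∈ ℝ^n define the 2n×2n matrix Π(ξ,η) = (1/4)·[[D_ξ A D_ξ, D_ξ A D_η],[D_η A D_ξ, D_η A D_η]]. For any ξ_0,η_0 ∈ ℝ^n, let M = [[D_{ξ_0}, −D_{η_0}],[D_{η_0}, D_{ξ_0}]] be the matrix of the linear map (ξ,η) ↦ (ξ_0∘ξ − η_0∘η, η_0∘ξ + ξ_0∘η), where ∘ denotes componentwise multiplication. Then for all ξ,η ∈ ℝ^n, M · Π(ξ,η) · M^t = Π(ξ_0∘ξ − η_0∘η, η_0∘ξ + ξ_0∘η). (Hence the componentwise multiplication action of (ℂ^*)^n on ℂ^n is a Poisson action for the quadratic Poisson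 structure Π.) -/
open Matrix

noncomputable section

/-- The quadratic Poisson bivector `Π(ξ,η)` on `ℝ^{2n} ≅ ℂ^n` associated to a
skew-symmetric matrix `A`:
`Π(ξ,η) = (1/4)[[D_ξ A D_ξ, D_ξ A D_η],[D_η A D_ξ, D_η A D_η]]`. -/
def PiC {N : ℕ} (A : Matrix (Fin N) (Fin N) ℝ) (ξ η : Fin N → ℝ) :
    Matrix (Fin N ⊕ Fin N) (Fin N ⊕ Fin N) ℝ :=
  (1 / 4 : ℝ) • Matrix.fromBlocks
    (Matrix.diagonal ξ * A * Matrix.diagonal ξ) (Matrix.diagonal ξ * A * Matrix.diagonal η)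
    (Matrix.diagonal η * A * Matrix.diagonal ξ) (Matrix.diagonal η * A * Matrix.diagonal η)

/-! With `V(ξ,η) = [[D_ξ],[D_η]]` we have `Π(ξ,η) = ¼ V A Vᵀ`, hence
`M Π Mᵀ = ¼ (M V) A (M V)ᵀ`; and `M V(ξ,η) = V((ξ₀ + iη₀)(ξ + iη))` componentwise, because
diagonal matrices multiply entrywise. -/

theorem fromBlocks_diagonal_mul_fromRows_diagonal {n R : Type*} [Fintype n] [DecidableEq n]
    [CommRing R] (ξ₀ η₀ ξ η : n → R) :
    fromBlocks (diagonal ξ₀) (-diagonal η₀) (diagonal η₀) (diagonal ξ₀) *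
        fromRows (diagonal ξ) (diagonal η) =
      fromRows (diagonal fun i => ξ₀ i * ξ i - η₀ i * η i)
        (diagonal fun i => η₀ i * ξ i + ξ₀ i * η i) := by
  simp only [fromBlocks_mul_fromRows, diagonal_mul_diagonal, Matrix.neg_mul, ← sub_eq_add_neg,
    diagonal_sub, diagonal_add]

theorem PiC_eq_smul_fromRows_mul_mul_transpose {N : ℕ} (A : Matrix (Fin N) (Fin N) ℝ)
    (ξ η : Fin N → ℝ) :
    PiC A ξ η = (1 / 4 : ℝ) •
      (fromRows (diagonal ξ) (diagonal η) * A * (fromRows (diagonal ξ) (diagonal η))ᵀ) := by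
  rw [PiC, transpose_fromRows, diagonal_transpose, diagonal_transpose, fromRows_mul,
    fromRows_mul_fromCols]

theorem stmt16_general {N : ℕ} (A : Matrix (Fin N) (Fin N) ℝ)
    (ξ₀ η₀ : Fin N → ℝ)
    (M : Matrix (Fin N ⊕ Fin N) (Fin N ⊕ Fin N) ℝ)
    (hM : M = Matrix.fromBlocks (Matrix.diagonal ξ₀) (-Matrix.diagonal η₀)
      (Matrix.diagonal η₀) (Matrix.diagonal ξ₀)) :
    ∀ ξ η : Fin N → ℝ,
      M * PiC A ξ η * Mᵀ =
        PiC A (fun i => ξ₀ i * ξ i - η₀ i * η i) (fun i => η₀ i * ξ i + ξ₀ i * η i) := by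
  intro ξ η
  subst hM
  rw [PiC_eq_smul_fromRows_mul_mul_transpose, PiC_eq_smul_fromRows_mul_mul_transpose,
    ← fromBlocks_diagonal_mul_fromRows_diagonal ξ₀ η₀ ξ η]
  simp only [transpose_mul, Matrix.mul_smul, Matrix.smul_mul, Matrix.mul_assoc]

/-- The componentwise multiplication action of `(ℂ^*)^n` on `ℂ^n` is Poisson for `Π`:
with `M = [[D_{ξ₀}, -D_{η₀}],[D_{η₀}, D_{ξ₀}]]`,
`M Π(ξ,η) Mᵀ = Π(ξ₀∘ξ - η₀∘η, η₀∘ξ + ξ₀∘η)`. -/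
theorem stmt16 {N : ℕ} (A : Matrix (Fin N) (Fin N) ℝ) (hA : Aᵀ = -A)
    (ξ₀ η₀ : Fin N → ℝ)
    (M : Matrix (Fin N ⊕ Fin N) (Fin N ⊕ Fin N) ℝ)
    (hM : M = Matrix.fromBlocks (Matrix.diagonal ξ₀) (-Matrix.diagonal η₀)
      (Matrix.diagonal η₀) (Matrix.diagonal ξ₀)) :
    ∀ ξ η : Fin N → ℝ,
      M * PiC A ξ η * Mᵀ =
        PiC A (fun i => ξ₀ i * ξ i - η₀ i * η i) (fun i => η₀ i * ξ i + ξ₀ i * η i) :=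
  stmt16_general A ξ₀ η₀ M hM
end
end

section
/- Let A ∈ Mat_{n×n}(ℝ), I ∈ ℐ_n̲, and let x ∈ ℝ^n satisfy x_j = 0 for all j ∉ I. Then π_A(x)_{ij} = 0 whenever i ∉ I or j ∉ I, and for all i,j ∈ I, π_A(x)_{ij} = π_{A_I}(x|_I)_{ij}, where x|_I is the vector of coordinates of x indexed by I and π_{A_I} is built from the restricted game (n̲^I, A_I). (Thus the inclusion of the face σ_I into Γ_n̲ is a Poisson map, and the faces make Γ_n̲ a Poisson stratified space.) -/
open Matrix

noncomputable section

/-- The block diagonal matrix `T_x` for an index set `ι` with group map `g`: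
`(T_x)_{ij} = x_i [g i = g j] - δ_{ij}` (i.e. `T^α_x = x^α 𝟙ᵗ - I` on each group). -/
def Tm {ι γ : Type} [DecidableEq ι] [DecidableEq γ] (g : ι → γ) (x : ι → ℝ) :
    Matrix ι ι ℝ :=
  fun i j => (if g i = g j then x i else 0) - (if i = j then 1 else 0)

/-- The bivector `π_A(x) = - T_x D_x A D_x T_xᵀ` for an index set `ι` with
group map `g`. -/
def piG {ι γ : Type} [Fintype ι] [DecidableEq ι] [DecidableEq γ] (g : ι → γ)
    (A : Matrix ι ι ℝ) (x : ι → ℝ) : Matrix ι ι ℝ :=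
  -(Tm g x * Matrix.diagonal x * A * Matrix.diagonal x * (Tm g x)ᵀ)

/-! The bivector factors as `π_A(x) = -M A Mᵀ` with `M = T_x D_x`, and `M_{ik} = 0` as soon as
`x_i = 0` or `x_k = 0`. So off the support of `x` the rows and columns of `π_A(x)` vanish, and on
the support the sums defining `M A Mᵀ` only see indices in `I`, where `M` is the matrix of the
restricted game. -/

open Finset

namespace Matrix

variable {l m n o p : Type*} {α : Type*} [Fintype n] [NonUnitalNonAssocSemiring α]

theorem submatrix_mul_of_apply_eq_zero_left (s : Finset n) (M : Matrix m n α) (N : Matrix n o α)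
    (e : l → m) (f : p → o) (hM : ∀ i, ∀ j ∉ s, M i j = 0) :
    (M * N).submatrix e f = M.submatrix e ((↑) : s → n) * N.submatrix ((↑) : s → n) f := by
  ext i k
  simp only [submatrix_apply, mul_apply]
  rw [sum_coe_sort s (fun j => M (e i) j * N j (f k))]
  exact (sum_subset (subset_univ s) fun j _ hj => by simp [hM _ j hj]).symm

theorem submatrix_mul_of_apply_eq_zero_right (s : Finset n) (M : Matrix m n α) (N : Matrix n o α)
    (e : l → m) (f : p → o) (hN : ∀ j ∉ s, ∀ k, N j k = 0) :
    (M * N).submatrix e f = M.submatrix e ((↑) : s → n) * N.submatrix ((↑) : s → n) f := by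
  ext i k
  simp only [submatrix_apply, mul_apply]
  rw [sum_coe_sort s (fun j => M (e i) j * N j (f k))]
  exact (sum_subset (subset_univ s) fun j _ hj => by simp [hN j hj]).symm

end Matrix

section Bivector

variable {ι γ : Type} [Fintype ι] [DecidableEq ι] [DecidableEq γ] (g : ι → γ) (x : ι → ℝ)

theorem Tm_mul_diagonal_apply_eq_zero {i k : ι} (h : x i = 0 ∨ x k = 0) :
    (Tm g x * diagonal x) i k = 0 := by
  rw [mul_diagonal]
  rcases h with hi | hk
  · by_cases hik : i = k
    · simp [← hik, hi]
    · simp [Tm, hi, hik]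
  · simp [hk]

variable (A : Matrix ι ι ℝ)

theorem piG_eq_neg_mul_mul_transpose :
    piG g A x = -(Tm g x * diagonal x * A * (Tm g x * diagonal x)ᵀ) := by
  simp only [piG, transpose_mul, diagonal_transpose, Matrix.mul_assoc]

theorem piG_apply_eq_zero_of_left {i : ι} (hi : x i = 0) (j : ι) : piG g A x i j = 0 := by
  have hrow (k : ι) := Tm_mul_diagonal_apply_eq_zero g x (k := k) (.inl hi)
  rw [piG_eq_neg_mul_mul_transpose]
  generalize Tm g x * diagonal x = M at hrow
  simp [mul_apply, hrow]

theorem piG_apply_eq_zero_of_right {j : ι} (hj : x j = 0) (i : ι) : piG g A x i j = 0 := by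
  have hrow (k : ι) := Tm_mul_diagonal_apply_eq_zero g x (k := k) (.inl hj)
  rw [piG_eq_neg_mul_mul_transpose]
  generalize Tm g x * diagonal x = M at hrow
  simp [mul_apply, hrow]

theorem piG_submatrix_val_of_forall_notMem_eq_zero (I : Finset ι) (hx : ∀ j ∉ I, x j = 0) :
    (piG g A x).submatrix (↑) (↑) =
      piG (fun k : I => g k) (A.submatrix (↑) (↑)) (fun k : I => x k) := by
  have hM_restrict : (Tm g x * diagonal x).submatrix ((↑) : I → ι) (↑) =
      Tm (fun k : I => g k) (fun k : I => x k) * diagonal (fun k : I => x k) := by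
    ext a b
    simp only [submatrix_apply, mul_diagonal, Tm, Subtype.ext_iff]
  have hcol (i : ι) : ∀ k ∉ I, (Tm g x * diagonal x) i k = 0 := fun k hk =>
    Tm_mul_diagonal_apply_eq_zero g x (.inr (hx k hk))
  rw [piG_eq_neg_mul_mul_transpose, piG_eq_neg_mul_mul_transpose, ← hM_restrict,
    transpose_submatrix, ← submatrix_mul_of_apply_eq_zero_left I _ _ _ _ hcol,
    ← submatrix_mul_of_apply_eq_zero_right I _ (Tm g x * diagonal x)ᵀ _ _
      fun k hk j => hcol j k hk]
  rfl

end Bivector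

theorem stmt18_general {p : ℕ} {n : Fin p → ℕ}
    (A : Matrix (Idx p n) (Idx p n) ℝ) (I : Finset (Idx p n))
    (x : Idx p n → ℝ) (hxI : ∀ j ∉ I, x j = 0) :
    (∀ i j : Idx p n, i ∉ I ∨ j ∉ I → piG Sigma.fst A x i j = 0) ∧
    (∀ (i j : Idx p n) (hi : i ∈ I) (hj : j ∈ I),
      piG (fun k : I => (k : Idx p n).1)
        (A.submatrix (Subtype.val : I → Idx p n) Subtype.val)
        (fun k : I => x k) ⟨i, hi⟩ ⟨j, hj⟩ = piG Sigma.fst A x i j) := by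
  refine ⟨fun i j h => ?_, fun i j hi hj => ?_⟩
  · rcases h with hi | hj
    · exact piG_apply_eq_zero_of_left _ _ A (hxI i hi) j
    · exact piG_apply_eq_zero_of_right _ _ A (hxI j hj) i
  · exact congr_fun₂ (piG_submatrix_val_of_forall_notMem_eq_zero Sigma.fst x A I hxI).symm
      ⟨i, hi⟩ ⟨j, hj⟩

/-- If `x_j = 0` for all `j ∉ I`, then `π_A(x)_{ij} = 0` whenever `i ∉ I` or `j ∉ I`,
and on the indices of `I` the bivector `π_A(x)` coincides with the bivector
`π_{A_I}(x|_I)` of the restricted game `(n̲^I, A_I)`: the inclusion of the face `σ_I`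
is a Poisson map, making `Γ_n̲` a Poisson stratified space. -/
theorem stmt18 {p : ℕ} {n : Fin p → ℕ} (hn : ∀ α, 0 < n α)
    (A : Matrix (Idx p n) (Idx p n) ℝ) (I : Finset (Idx p n))
    (hI : ∀ α : Fin p, ∃ k : Fin (n α), (⟨α, k⟩ : Idx p n) ∈ I)
    (x : Idx p n → ℝ) (hxI : ∀ j ∉ I, x j = 0) :
    (∀ i j : Idx p n, i ∉ I ∨ j ∉ I → piG Sigma.fst A x i j = 0) ∧
    (∀ (i j : Idx p n) (hi : i ∈ I) (hj : j ∈ I),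
      piG (fun k : I => (k : Idx p n).1)
        (A.submatrix (Subtype.val : I → Idx p n) Subtype.val)
        (fun k : I => x k) ⟨i, hi⟩ ⟨j, hj⟩ = piG Sigma.fst A x i j) :=
  stmt18_general A I x hxI
end
end
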